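/- arXiv:2009.08435 — 6 statements merged into one kernel-verified Lean document; each statement's English description precedes it below -/
import Mathlib

section
/- Suppose Assumption 1 holds. Then the operator norm of conv, where both the domain ℝ^{d_in×h_in×w_in} and the codomain ℝ^{d_out×h_out×w_out} carry the sup norm (maximum absolute value over all entries), equals max_{1≤i≤d_out} Σ_{j=1}^{d_in} Σ_{k=1}^{k1} Σ_{t=1}^{k2} |K(i,j,k,t)|. -/
/-!
2D multi-channel convolutional layer, 0-based reindexing of the 1-based
description in the paper.  The input is `X : Fin d_in × Fin h_in × Fin w_in → ℝ`
(a 3D tensor), the kernel is `K : Fin d_out → Fin d_in → Fin k1 → Fin k2 → ℝ`,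
strides `s1 s2`, paddings `p1 p2`,
`h_out = (h_in + 2*p1 - k1)/s1 + 1`, `w_out = (w_in + 2*p2 - k2)/s2 + 1`.
-/

noncomputable section

/-- Zero-padded input, accessed with 0-based padded coordinates `a b`
(so `a` ranges over `0, …, h_in + 2*p1 - 1`):
`padX X j a b = X (j, a - p1, b - p2)` when `p1 ≤ a < h_in + p1` and
`p2 ≤ b < w_in + p2`, and `0` otherwise. -/
def padX (d_in h_in w_in p1 p2 : ℕ)
    (X : Fin d_in × Fin h_in × Fin w_in → ℝ) (j : Fin d_in) (a b : ℕ) : ℝ :=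
  if h : p1 ≤ a ∧ a < h_in + p1 ∧ p2 ≤ b ∧ b < w_in + p2 then
    X (j, ⟨a - p1, by omega⟩, ⟨b - p2, by omega⟩)
  else 0

/-- The 2D multi-channel convolution:
`conv(X)(i,r,c) = ∑ j ∑ k ∑ t, K i j k t * X̃(j, r*s1 + k, c*s2 + t)`
(all indices 0-based). -/
def convMap (d_in d_out h_in w_in k1 k2 s1 s2 p1 p2 : ℕ)
    (K : Fin d_out → Fin d_in → Fin k1 → Fin k2 → ℝ)
    (X : Fin d_in × Fin h_in × Fin w_in → ℝ) :
    Fin d_out × Fin ((h_in + 2*p1 - k1)/s1 + 1) × Fin ((w_in + 2*p2 - k2)/s2 + 1) → ℝ :=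
  fun irc => ∑ j : Fin d_in, ∑ k : Fin k1, ∑ t : Fin k2,
    K irc.1 j k t *
      padX d_in h_in w_in p1 p2 X j (irc.2.1.val * s1 + k.val) (irc.2.2.val * s2 + t.val)

lemma padX_add (d_in h_in w_in p1 p2 : ℕ)
    (X Y : Fin d_in × Fin h_in × Fin w_in → ℝ) (j : Fin d_in) (a b : ℕ) :
    padX d_in h_in w_in p1 p2 (X + Y) j a b =
      padX d_in h_in w_in p1 p2 X j a b + padX d_in h_in w_in p1 p2 Y j a b := by
  unfold padX; split <;> simp

lemma padX_smul (d_in h_in w_in p1 p2 : ℕ) (c : ℝ)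
    (X : Fin d_in × Fin h_in × Fin w_in → ℝ) (j : Fin d_in) (a b : ℕ) :
    padX d_in h_in w_in p1 p2 (c • X) j a b = c * padX d_in h_in w_in p1 p2 X j a b := by
  unfold padX; split <;> simp

/-- `conv` as a linear map between the spaces of 3D tensors. -/
def convLinMap (d_in d_out h_in w_in k1 k2 s1 s2 p1 p2 : ℕ)
    (K : Fin d_out → Fin d_in → Fin k1 → Fin k2 → ℝ) :
    ((Fin d_in × Fin h_in × Fin w_in) → ℝ) →ₗ[ℝ]
      ((Fin d_out × Fin ((h_in + 2*p1 - k1)/s1 + 1) × Fin ((w_in + 2*p2 - k2)/s2 + 1)) → ℝ) where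
  toFun := convMap d_in d_out h_in w_in k1 k2 s1 s2 p1 p2 K
  map_add' X Y := by
    funext irc
    simp only [convMap, padX_add, mul_add, Finset.sum_add_distrib, Pi.add_apply]
  map_smul' c X := by
    funext irc
    simp only [convMap, padX_smul, RingHom.id_apply, Pi.smul_apply, smul_eq_mul,
      Finset.mul_sum]
    congr 1; funext j; congr 1; funext k; congr 1; funext t; ring

/-- `conv` as a continuous linear map between the sup-normed spaces of 3D tensors
(the `Pi` norm on `ι → ℝ` is the sup norm). -/
def convCLM (d_in d_out h_in w_in k1 k2 s1 s2 p1 p2 : ℕ)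
    (K : Fin d_out → Fin d_in → Fin k1 → Fin k2 → ℝ) :
    ((Fin d_in × Fin h_in × Fin w_in) → ℝ) →L[ℝ]
      ((Fin d_out × Fin ((h_in + 2*p1 - k1)/s1 + 1) × Fin ((w_in + 2*p2 - k2)/s2 + 1)) → ℝ) :=
  (convLinMap d_in d_out h_in w_in k1 k2 s1 s2 p1 p2 K).toContinuousLinearMap

/-- Under Assumption 1 the `ℓ∞ → ℓ∞` operator norm of `conv`
equals `max_i ∑ j ∑ k ∑ t |K i j k t|`. -/
theorem conv_opNorm_linf (d_in d_out h_in w_in k1 k2 s1 s2 p1 p2 : ℕ)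
    (hdin : 0 < d_in) (hdout : 0 < d_out) (hhin : 0 < h_in) (hwin : 0 < w_in)
    (hk1pos : 0 < k1) (hk2pos : 0 < k2) (hs1 : 0 < s1) (hs2 : 0 < s2)
    (hk1 : k1 ≤ h_in + 2*p1) (hk2 : k2 ≤ w_in + 2*p2)
    (K : Fin d_out → Fin d_in → Fin k1 → Fin k2 → ℝ)
    -- Assumption 1: `c1`, `c2` are the smallest positive integers with
    -- `c1*s1 ≥ p1`, `c2*s2 ≥ p2`, and `k1 + c1*s1 - p1 ≤ h_in`, `k2 + c2*s2 - p2 ≤ w_in`.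
    (c1 c2 : ℕ) (hc1pos : 0 < c1) (hc2pos : 0 < c2)
    (hc1 : p1 ≤ c1 * s1) (hc2 : p2 ≤ c2 * s2)
    (hc1min : ∀ m : ℕ, 0 < m → p1 ≤ m * s1 → c1 ≤ m)
    (hc2min : ∀ m : ℕ, 0 < m → p2 ≤ m * s2 → c2 ≤ m)
    (ha1 : k1 + c1 * s1 ≤ h_in + p1) (ha2 : k2 + c2 * s2 ≤ w_in + p2) :
    ‖convCLM d_in d_out h_in w_in k1 k2 s1 s2 p1 p2 K‖ =
      Finset.univ.sup' (Finset.univ_nonempty_iff.mpr (Fin.pos_iff_nonempty.mp hdout))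
        (fun i : Fin d_out => ∑ j : Fin d_in, ∑ k : Fin k1, ∑ t : Fin k2, |K i j k t|) := by
  have hne := Finset.univ_nonempty_iff.mpr (Fin.pos_iff_nonempty.mp hdout)
  set M := Finset.univ.sup' hne
      (fun i : Fin d_out => ∑ j : Fin d_in, ∑ k : Fin k1, ∑ t : Fin k2, |K i j k t|) with hM
  have hout1 : c1 < (h_in + 2*p1 - k1)/s1 + 1 := by
    have h1 : c1 * s1 ≤ h_in + 2*p1 - k1 := by omega
    have := (Nat.le_div_iff_mul_le hs1).mpr h1
    omega
  have hout2 : c2 < (w_in + 2*p2 - k2)/s2 + 1 := by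
    have h1 : c2 * s2 ≤ w_in + 2*p2 - k2 := by omega
    have := (Nat.le_div_iff_mul_le hs2).mpr h1
    omega
  have hMnonneg : 0 ≤ M := by
    obtain ⟨i⟩ := Fin.pos_iff_nonempty.mp hdout
    refine le_trans ?_ (Finset.le_sup' _ (Finset.mem_univ i))
    positivity
  have hpadbd : ∀ (X : Fin d_in × Fin h_in × Fin w_in → ℝ) (j : Fin d_in) (a b : ℕ),
      |padX d_in h_in w_in p1 p2 X j a b| ≤ ‖X‖ := by
    intro X j a b
    unfold padX
    split
    · exact (Real.norm_eq_abs _) ▸ norm_le_pi_norm X _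
    · simp
  apply ContinuousLinearMap.opNorm_eq_of_bounds hMnonneg
  · intro X
    rw [pi_norm_le_iff_of_nonneg (by positivity)]
    intro irc
    have : convCLM d_in d_out h_in w_in k1 k2 s1 s2 p1 p2 K X irc
        = ∑ j : Fin d_in, ∑ k : Fin k1, ∑ t : Fin k2,
          K irc.1 j k t *
            padX d_in h_in w_in p1 p2 X j (irc.2.1.val * s1 + k.val) (irc.2.2.val * s2 + t.val) := rfl
    rw [Real.norm_eq_abs, this]
    calc |∑ j : Fin d_in, ∑ k : Fin k1, ∑ t : Fin k2,
          K irc.1 j k t *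
            padX d_in h_in w_in p1 p2 X j (irc.2.1.val * s1 + k.val) (irc.2.2.val * s2 + t.val)|
        ≤ ∑ j : Fin d_in, ∑ k : Fin k1, ∑ t : Fin k2,
          |K irc.1 j k t| * ‖X‖ := by
          refine (Finset.abs_sum_le_sum_abs _ _).trans (Finset.sum_le_sum fun j _ => ?_)
          refine (Finset.abs_sum_le_sum_abs _ _).trans (Finset.sum_le_sum fun k _ => ?_)
          refine (Finset.abs_sum_le_sum_abs _ _).trans (Finset.sum_le_sum fun t _ => ?_)
          rw [abs_mul]
          exact mul_le_mul_of_nonneg_left (hpadbd X j _ _) (abs_nonneg _)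
      _ = (∑ j : Fin d_in, ∑ k : Fin k1, ∑ t : Fin k2, |K irc.1 j k t|) * ‖X‖ := by
          simp [Finset.sum_mul]
      _ ≤ M * ‖X‖ := by
          rw [hM]
          exact mul_le_mul_of_nonneg_right
            (Finset.le_sup' (fun i : Fin d_out => ∑ j : Fin d_in, ∑ k : Fin k1, ∑ t : Fin k2, |K i j k t|) (Finset.mem_univ irc.1)) (norm_nonneg X)
  · intro N hN hbound
    rw [hM]
    apply Finset.sup'_le
    intro i _
    -- witness input
    set X : Fin d_in × Fin h_in × Fin w_in → ℝ := fun jab =>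
      if h : c1*s1 - p1 ≤ jab.2.1.val ∧ jab.2.1.val < c1*s1 - p1 + k1 ∧
          c2*s2 - p2 ≤ jab.2.2.val ∧ jab.2.2.val < c2*s2 - p2 + k2 then
        (if K i jab.1 ⟨jab.2.1.val - (c1*s1-p1), by omega⟩
            ⟨jab.2.2.val - (c2*s2-p2), by omega⟩ < 0 then (-1:ℝ) else 1)
      else 0 with hX
    have hXbd : ‖X‖ ≤ 1 := by
      rw [pi_norm_le_iff_of_nonneg zero_le_one]
      intro jab
      rw [Real.norm_eq_abs, hX]
      dsimp only
      split
      · split <;> simp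
      · simp
    have hval : convCLM d_in d_out h_in w_in k1 k2 s1 s2 p1 p2 K X
        (i, ⟨c1, hout1⟩, ⟨c2, hout2⟩)
        = ∑ j : Fin d_in, ∑ k : Fin k1, ∑ t : Fin k2, |K i j k t| := by
      show (∑ j : Fin d_in, ∑ k : Fin k1, ∑ t : Fin k2,
          K i j k t * padX d_in h_in w_in p1 p2 X j (c1 * s1 + k.val) (c2 * s2 + t.val)) = _
      refine Finset.sum_congr rfl fun j _ => Finset.sum_congr rfl fun k _ =>
        Finset.sum_congr rfl fun t _ => ?_
      have hk' := k.isLt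
      have ht' := t.isLt
      have hpad : padX d_in h_in w_in p1 p2 X j (c1 * s1 + k.val) (c2 * s2 + t.val)
          = X (j, ⟨c1 * s1 + k.val - p1, by omega⟩, ⟨c2 * s2 + t.val - p2, by omega⟩) := by
        unfold padX
        rw [dif_pos (by omega)]
      rw [hpad, hX]
      dsimp only
      rw [dif_pos (by omega)]
      have hfk : (⟨c1 * s1 + k.val - p1 - (c1*s1 - p1), by omega⟩ : Fin k1) = k := by
        apply Fin.ext; simp only; omega
      have hft : (⟨c2 * s2 + t.val - p2 - (c2*s2 - p2), by omega⟩ : Fin k2) = t := by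
        apply Fin.ext; simp only; omega
      rw [hfk, hft]
      split <;> rename_i hsign
      · rw [abs_of_neg hsign]; ring
      · rw [abs_of_nonneg (not_lt.mp hsign)]; ring
    have h1 : (∑ j : Fin d_in, ∑ k : Fin k1, ∑ t : Fin k2, |K i j k t|)
        ≤ ‖convCLM d_in d_out h_in w_in k1 k2 s1 s2 p1 p2 K X‖ := by
      rw [← hval]
      exact (Real.norm_eq_abs _ ▸ le_abs_self _).trans (norm_le_pi_norm _ _)
    calc (∑ j : Fin d_in, ∑ k : Fin k1, ∑ t : Fin k2, |K i j k t|)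
        ≤ ‖convCLM d_in d_out h_in w_in k1 k2 s1 s2 p1 p2 K X‖ := h1
      _ ≤ N * ‖X‖ := hbound X
      _ ≤ N * 1 := mul_le_mul_of_nonneg_left hXbd hN
      _ = N := mul_one N

end
end

section
/- Suppose there is no padding, i.e., p1 = p2 = 0 (with k1 ≤ h_in and k2 ≤ w_in). Then the sum of the squares of all entries of M equals h_out·w_out · Σ_{i=1}^{d_out} Σ_{j=1}^{d_in} Σ_{k=1}^{k1} Σ_{t=1}^{k2} K(i,j,k,t)²; that is, the Frobenius norm of M equals sqrt( h_out·w_out · Σ_{i,j,k,t} |K(i,j,k,t)|² ). -/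
/-!
2D multi-channel convolutional layer, 0-based reindexing of the 1-based
description in the paper.  The input is `X : Fin d_in × Fin h_in × Fin w_in → ℝ`
(a 3D tensor), the kernel is `K : Fin d_out → Fin d_in → Fin k1 → Fin k2 → ℝ`,
strides `s1 s2`, paddings `p1 p2`,
`h_out = (h_in + 2*p1 - k1)/s1 + 1`, `w_out = (w_in + 2*p2 - k2)/s2 + 1`.
-/

noncomputable section

/-- The matrix `M` of `conv` in the standard bases: the entry at row `(i,r,c)`
and column `(j,y,x)` is the coefficient of the input entry `(j,y,x)` in the
output entry `(i,r,c)`, i.e. `conv` applied to the standard basis vector of the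
column index, evaluated at the row index.  (Rows and columns are indexed by the
output and input coordinate triples, which correspond to the 1-based linear
indices `(i−1)·h_out·w_out + (r−1)·w_out + c` and
`(j−1)·h_in·w_in + (y−1)·w_in + x` of the paper.) -/
def convMatrix (d_in d_out h_in w_in k1 k2 s1 s2 p1 p2 : ℕ)
    (K : Fin d_out → Fin d_in → Fin k1 → Fin k2 → ℝ) :
    Matrix (Fin d_out × Fin ((h_in + 2*p1 - k1)/s1 + 1) × Fin ((w_in + 2*p2 - k2)/s2 + 1))
      (Fin d_in × Fin h_in × Fin w_in) ℝ :=
  fun out inp =>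
    convMap d_in d_out h_in w_in k1 k2 s1 s2 p1 p2 K (fun q => if q = inp then 1 else 0) out


lemma aux_lt {h_in k1 s1 r k : ℕ} (hs1 : 0 < s1) (hk1 : k1 ≤ h_in)
    (hr : r < (h_in + 2*0 - k1)/s1 + 1) (hk : k < k1) : r * s1 + k < h_in := by
  have hr' : r < (h_in - k1)/s1 + 1 := by simpa using hr
  have h1 : r ≤ (h_in - k1)/s1 := by omega
  have h2 : r * s1 ≤ h_in - k1 := (Nat.le_div_iff_mul_le hs1).mp h1
  omega

lemma convMatrix_entry (d_in d_out h_in w_in k1 k2 s1 s2 : ℕ)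
    (hs1 : 0 < s1) (hs2 : 0 < s2) (hk1 : k1 ≤ h_in) (hk2 : k2 ≤ w_in)
    (K : Fin d_out → Fin d_in → Fin k1 → Fin k2 → ℝ)
    (i : Fin d_out) (r : Fin ((h_in + 2*0 - k1)/s1 + 1))
    (c : Fin ((w_in + 2*0 - k2)/s2 + 1))
    (j : Fin d_in) (y : Fin h_in) (x : Fin w_in) :
    convMatrix d_in d_out h_in w_in k1 k2 s1 s2 0 0 K (i, r, c) (j, y, x) =
      if h : r.val * s1 ≤ y.val ∧ y.val < r.val * s1 + k1 ∧
             c.val * s2 ≤ x.val ∧ x.val < c.val * s2 + k2 then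
        K i j ⟨y.val - r.val * s1, by omega⟩ ⟨x.val - c.val * s2, by omega⟩
      else 0 := by
  unfold convMatrix convMap
  rw [Fintype.sum_eq_single j]
  · have step : ∀ (k : Fin k1) (t : Fin k2),
        K i j k t * padX d_in h_in w_in 0 0 (fun q => if q = (j, y, x) then 1 else 0) j
            (r.val * s1 + k.val) (c.val * s2 + t.val) =
        K i j k t * (if r.val * s1 + k.val = y.val ∧ c.val * s2 + t.val = x.val then 1 else 0) := by
      intro k t
      have ha := aux_lt hs1 hk1 r.isLt k.isLt
      have hb := aux_lt hs2 hk2 c.isLt t.isLt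
      rw [padX, dif_pos (by omega)]
      congr 1
      refine if_congr ?_ rfl rfl
      simp only [Prod.ext_iff, Fin.ext_iff, Fin.val_mk, eq_self_iff_true, true_and]
      omega
    simp only [step]
    by_cases h : r.val * s1 ≤ y.val ∧ y.val < r.val * s1 + k1 ∧
             c.val * s2 ≤ x.val ∧ x.val < c.val * s2 + k2
    · rw [dif_pos h]
      rw [Fintype.sum_eq_single (⟨y.val - r.val * s1, by omega⟩ : Fin k1)]
      · rw [Fintype.sum_eq_single (⟨x.val - c.val * s2, by omega⟩ : Fin k2)]
        · rw [if_pos (by simp only [Fin.val_mk]; omega), mul_one]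
        · intro t ht
          rw [if_neg, mul_zero]
          simp only [Fin.val_mk]
          intro hc; exact ht (Fin.ext (by simp only [Fin.val_mk]; omega))
      · intro k hk
        apply Finset.sum_eq_zero; intro t _
        rw [if_neg, mul_zero]
        intro hc; exact hk (Fin.ext (by simp only [Fin.val_mk]; omega))
    · rw [dif_neg h]
      apply Finset.sum_eq_zero; intro k _
      apply Finset.sum_eq_zero; intro t _
      have := k.isLt; have := t.isLt
      rw [if_neg, mul_zero]
      intro hc; exact h (by omega)
  · intro j' hj'
    apply Finset.sum_eq_zero; intro k _
    apply Finset.sum_eq_zero; intro t _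
    rw [padX]
    split
    · rw [if_neg, mul_zero]; simp [Prod.ext_iff]; intro h; exact absurd h hj'
    · rw [mul_zero]



lemma conv_row_sum (d_in d_out h_in w_in k1 k2 s1 s2 : ℕ)
    (hs1 : 0 < s1) (hs2 : 0 < s2) (hk1 : k1 ≤ h_in) (hk2 : k2 ≤ w_in)
    (K : Fin d_out → Fin d_in → Fin k1 → Fin k2 → ℝ)
    (i : Fin d_out) (r : Fin ((h_in + 2*0 - k1)/s1 + 1))
    (c : Fin ((w_in + 2*0 - k2)/s2 + 1)) (j : Fin d_in) :
    ∑ p : Fin h_in × Fin w_in,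
        (convMatrix d_in d_out h_in w_in k1 k2 s1 s2 0 0 K (i, r, c) (j, p.1, p.2)) ^ 2 =
      ∑ q : Fin k1 × Fin k2, K i j q.1 q.2 ^ 2 := by
  classical
  set F : Fin h_in × Fin w_in → ℝ := fun p =>
    (convMatrix d_in d_out h_in w_in k1 k2 s1 s2 0 0 K (i, r, c) (j, p.1, p.2)) ^ 2 with hF
  set e : Fin k1 × Fin k2 → Fin h_in × Fin w_in := fun q =>
    (⟨r.val * s1 + q.1.val, aux_lt hs1 hk1 r.isLt q.1.isLt⟩,
     ⟨c.val * s2 + q.2.val, aux_lt hs2 hk2 c.isLt q.2.isLt⟩) with he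
  have hzero : ∀ p ∈ Finset.univ, p ∉ Finset.univ.image e → F p = 0 := by
    intro p _ hp
    simp only [hF, convMatrix_entry d_in d_out h_in w_in k1 k2 s1 s2 hs1 hs2 hk1 hk2]
    split
    · exfalso; apply hp
      rename_i h
      refine Finset.mem_image.mpr ⟨(⟨p.1.val - r.val * s1, by omega⟩,
        ⟨p.2.val - c.val * s2, by omega⟩), Finset.mem_univ _, ?_⟩
      simp only [he, Prod.ext_iff, Fin.ext_iff, Fin.val_mk]
      omega
    · exact zero_pow two_ne_zero
  calc ∑ p, F p = ∑ p ∈ Finset.univ.image e, F p :=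
        (Finset.sum_subset (Finset.subset_univ _) hzero).symm
    _ = ∑ q, F (e q) := by
        apply Finset.sum_image
        intro a _ b _ hab
        simp only [he, Prod.ext_iff, Fin.ext_iff, Fin.val_mk] at hab ⊢
        omega
    _ = ∑ q : Fin k1 × Fin k2, K i j q.1 q.2 ^ 2 := by
        apply Finset.sum_congr rfl
        intro q _
        simp only [hF, he,
          convMatrix_entry d_in d_out h_in w_in k1 k2 s1 s2 hs1 hs2 hk1 hk2]
        rw [dif_pos (by refine ⟨?_, ?_, ?_, ?_⟩ <;> (try simp only [Fin.val_mk]) <;> omega)]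
        congr 2 <;> apply Fin.ext <;> (try simp only [Fin.val_mk]) <;> omega

/-- With no padding (`p1 = p2 = 0`), the sum of the squares of
all entries of `M` equals `h_out·w_out · ∑ i ∑ j ∑ k ∑ t (K i j k t)²`; that is,
the Frobenius norm of `M` equals

`sqrt(h_out·w_out · ∑_{i,j,k,t} |K i j k t|²)`. -/
theorem conv_frobenius_no_padding (d_in d_out h_in w_in k1 k2 s1 s2 : ℕ)
    (hdin : 0 < d_in) (hdout : 0 < d_out) (hhin : 0 < h_in) (hwin : 0 < w_in)
    (hk1pos : 0 < k1) (hk2pos : 0 < k2) (hs1 : 0 < s1) (hs2 : 0 < s2)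
    (hk1 : k1 ≤ h_in) (hk2 : k2 ≤ w_in)
    (K : Fin d_out → Fin d_in → Fin k1 → Fin k2 → ℝ) :
    (∑ m, ∑ n, (convMatrix d_in d_out h_in w_in k1 k2 s1 s2 0 0 K m n) ^ 2 =
      ((((h_in + 2*0 - k1)/s1 + 1) * ((w_in + 2*0 - k2)/s2 + 1) : ℕ) : ℝ) *
        ∑ i : Fin d_out, ∑ j : Fin d_in, ∑ k : Fin k1, ∑ t : Fin k2, K i j k t ^ 2) ∧
    Real.sqrt (∑ m, ∑ n, (convMatrix d_in d_out h_in w_in k1 k2 s1 s2 0 0 K m n) ^ 2) =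
      Real.sqrt (((((h_in + 2*0 - k1)/s1 + 1) * ((w_in + 2*0 - k2)/s2 + 1) : ℕ) : ℝ) *
        ∑ i : Fin d_out, ∑ j : Fin d_in, ∑ k : Fin k1, ∑ t : Fin k2, |K i j k t| ^ 2) := by
  have h1 : ∑ m, ∑ n, (convMatrix d_in d_out h_in w_in k1 k2 s1 s2 0 0 K m n) ^ 2 =
      ((((h_in + 2*0 - k1)/s1 + 1) * ((w_in + 2*0 - k2)/s2 + 1) : ℕ) : ℝ) *
        ∑ i : Fin d_out, ∑ j : Fin d_in, ∑ k : Fin k1, ∑ t : Fin k2, K i j k t ^ 2 := by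
    calc ∑ m, ∑ n, (convMatrix d_in d_out h_in w_in k1 k2 s1 s2 0 0 K m n) ^ 2
        = ∑ i : Fin d_out, ∑ r, ∑ c, ∑ j : Fin d_in, ∑ p : Fin h_in × Fin w_in,
            (convMatrix d_in d_out h_in w_in k1 k2 s1 s2 0 0 K (i, r, c) (j, p.1, p.2)) ^ 2 := by
          simp only [Fintype.sum_prod_type]
      _ = ∑ i : Fin d_out, ∑ r, ∑ c, ∑ j : Fin d_in, ∑ q : Fin k1 × Fin k2,
            K i j q.1 q.2 ^ 2 := by
          refine Finset.sum_congr rfl fun i _ => Finset.sum_congr rfl fun r _ =>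
            Finset.sum_congr rfl fun c _ => Finset.sum_congr rfl fun j _ => ?_
          exact conv_row_sum d_in d_out h_in w_in k1 k2 s1 s2 hs1 hs2 hk1 hk2 K i r c j
      _ = _ := by
          simp only [Finset.sum_const, Finset.card_univ, Fintype.card_fin, nsmul_eq_mul,
            Fintype.sum_prod_type]
          rw [Finset.mul_sum]
          push_cast
          refine Finset.sum_congr rfl fun i _ => ?_
          ring
  exact ⟨h1, by rw [h1]; simp [sq_abs]⟩


end
end

section
/- Suppose Assumption 1 holds. For every j ∈ {1,…,d_in} and every index set 𝒜 ∈ 𝒮, there exists a column index n with (j−1)·h_in·w_in < n ≤ j·h_in·w_in such that for every i ∈ {1,…,d_out} and every (k,t) ∈ 𝒜, the value K(i,j,k,t) appears as an entry of the n-th column of M (i.e., there is a row m with M(m,n) = K(i,j,k,t)); in particular every nonzero value in {K(i,j,k,t) : 1 ≤ i ≤ d_out, (k,t) ∈ 𝒜} belongs to the set of nonzero values appearing in column n of M. -/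
/-!
2D multi-channel convolutional layer, 0-based reindexing of the 1-based
description in the paper.  The input is `X : Fin d_in × Fin h_in × Fin w_in → ℝ`
(a 3D tensor), the kernel is `K : Fin d_out → Fin d_in → Fin k1 → Fin k2 → ℝ`,
strides `s1 s2`, paddings `p1 p2`,
`h_out = (h_in + 2*p1 - k1)/s1 + 1`, `w_out = (w_in + 2*p2 - k2)/s2 + 1`.
-/

noncomputable section

/-- The index set `𝒜_(a,b)` of Lemma 1 (0-based):
`{(c,d) : s1 ∣ c - a, s2 ∣ d - b, 0 ≤ c - a ≤ h_in + 2p1 - k1, 0 ≤ d - b ≤ w_in + 2p2 - k2}`. -/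
def AFin (h_in w_in k1 k2 s1 s2 p1 p2 : ℕ) (a : Fin k1) (b : Fin k2) :
    Finset (Fin k1 × Fin k2) :=
  Finset.univ.filter fun cd =>
    a.val ≤ cd.1.val ∧ s1 ∣ (cd.1.val - a.val) ∧ cd.1.val - a.val ≤ h_in + 2*p1 - k1 ∧
    b.val ≤ cd.2.val ∧ s2 ∣ (cd.2.val - b.val) ∧ cd.2.val - b.val ≤ w_in + 2*p2 - k2

/-- The collection `𝒮 = {𝒜_(a,b) : (a,b) ∈ {1,…,k1} × {1,…,k2}}`. -/
def Ssets (h_in w_in k1 k2 s1 s2 p1 p2 : ℕ) : Finset (Finset (Fin k1 × Fin k2)) :=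
  Finset.univ.image fun ab : Fin k1 × Fin k2 => AFin h_in w_in k1 k2 s1 s2 p1 p2 ab.1 ab.2

lemma padX_delta (d_in h_in w_in p1 p2 : ℕ) (j j' : Fin d_in) (y : Fin h_in)
    (x : Fin w_in) (a b : ℕ) :
    padX d_in h_in w_in p1 p2 (fun q => if q = (j, y, x) then (1:ℝ) else 0) j' a b =
      if j' = j ∧ a = y.val + p1 ∧ b = x.val + p2 then 1 else 0 := by
  unfold padX
  split
  · rename_i h
    have hiff : ((j', (⟨a - p1, by omega⟩ : Fin h_in), (⟨b - p2, by omega⟩ : Fin w_in))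
        = (j, y, x)) ↔ (j' = j ∧ a = y.val + p1 ∧ b = x.val + p2) := by
      simp only [Prod.mk.injEq, Fin.ext_iff]
      omega
    simp only [hiff]
  · rename_i h
    rw [if_neg]
    rintro ⟨h1, h2, h3⟩
    exact h ⟨by omega, by omega, by omega, by omega⟩

lemma exists_shift (k1 h_in s1 p1 c1 : ℕ) (hs1 : 0 < s1)
    (hc1 : p1 ≤ c1 * s1) (ha1 : k1 + c1 * s1 ≤ h_in + p1) (a : ℕ) (ha : a < k1) :
    ∃ R : ℕ, R ≤ (h_in + 2*p1 - k1)/s1 ∧ p1 ≤ a + R * s1 ∧ a + R * s1 < h_in + p1 ∧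
      ∀ q, a + q * s1 < k1 → q * s1 ≤ h_in + 2*p1 - k1 → q ≤ R := by
  refine ⟨max c1 (min ((k1 - 1 - a)/s1) ((h_in + 2*p1 - k1)/s1)), ?_, ?_, ?_, ?_⟩
  · exact max_le ((Nat.le_div_iff_mul_le hs1).mpr (by omega)) (min_le_right _ _)
  · have : c1 * s1 ≤ (max c1 (min ((k1 - 1 - a)/s1) ((h_in + 2*p1 - k1)/s1))) * s1 :=
      Nat.mul_le_mul_right _ (le_max_left _ _)
    omega
  · rcases le_total c1 (min ((k1 - 1 - a)/s1) ((h_in + 2*p1 - k1)/s1)) with h | h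
    · rw [max_eq_right h]
      have : (min ((k1 - 1 - a)/s1) ((h_in + 2*p1 - k1)/s1)) * s1 ≤ k1 - 1 - a :=
        le_trans (Nat.mul_le_mul_right _ (min_le_left _ _)) (Nat.div_mul_le_self _ _)
      omega
    · rw [max_eq_left h]; omega
  · intro q hq1 hq2
    refine le_trans (le_min ?_ ?_) (le_max_right _ _)
    · exact (Nat.le_div_iff_mul_le hs1).mpr (by omega)
    · exact (Nat.le_div_iff_mul_le hs1).mpr hq2

lemma convMatrix_entry_s6 (d_in d_out h_in w_in k1 k2 s1 s2 p1 p2 : ℕ)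
    (K : Fin d_out → Fin d_in → Fin k1 → Fin k2 → ℝ)
    (i : Fin d_out) (j : Fin d_in)
    (r : Fin ((h_in + 2*p1 - k1)/s1 + 1)) (c : Fin ((w_in + 2*p2 - k2)/s2 + 1))
    (y : Fin h_in) (x : Fin w_in) (k : Fin k1) (t : Fin k2)
    (hr : r.val * s1 + k.val = y.val + p1) (hc : c.val * s2 + t.val = x.val + p2) :
    convMatrix d_in d_out h_in w_in k1 k2 s1 s2 p1 p2 K (i, r, c) (j, y, x) = K i j k t := by
  unfold convMatrix convMap
  simp only [padX_delta]
  rw [Fintype.sum_eq_single j]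
  · rw [Fintype.sum_eq_single k]
    · rw [Fintype.sum_eq_single t]
      · rw [if_pos ⟨rfl, hr, hc⟩, mul_one]
      · intro t' ht'
        rw [if_neg, mul_zero]
        rintro ⟨-, -, h3⟩
        exact ht' (Fin.ext (by omega))
    · intro k' hk'
      rw [Finset.sum_eq_zero]
      intro t' _
      rw [if_neg, mul_zero]
      rintro ⟨-, h2, -⟩
      exact hk' (Fin.ext (by omega))
  · intro j' hj'
    rw [Finset.sum_eq_zero]
    intro k' _
    rw [Finset.sum_eq_zero]
    intro t' _
    rw [if_neg, mul_zero]
    rintro ⟨h1, -, -⟩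
    exact hj' h1

/-- second part of Lemma 1.  Under Assumption 1, for every
input channel `j` and every `𝒜 ∈ 𝒮`, there is a column `n = (j, y, x)` of `M`
(its linear index satisfies `(j−1)·h_in·w_in < n ≤ j·h_in·w_in`) such that for
every `i` and every `(k,t) ∈ 𝒜` the value `K i j k t` appears as an entry of
that column; in particular every nonzero such value belongs to the set of
nonzero values appearing in column `n`. -/
theorem conv_matrix_column_contains_kernel (d_in d_out h_in w_in k1 k2 s1 s2 p1 p2 : ℕ)
    (hdin : 0 < d_in) (hdout : 0 < d_out) (hhin : 0 < h_in) (hwin : 0 < w_in)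
    (hk1pos : 0 < k1) (hk2pos : 0 < k2) (hs1 : 0 < s1) (hs2 : 0 < s2)
    (hk1 : k1 ≤ h_in + 2*p1) (hk2 : k2 ≤ w_in + 2*p2)
    (K : Fin d_out → Fin d_in → Fin k1 → Fin k2 → ℝ)
    -- Assumption 1
    (c1 c2 : ℕ) (hc1pos : 0 < c1) (hc2pos : 0 < c2)
    (hc1 : p1 ≤ c1 * s1) (hc2 : p2 ≤ c2 * s2)
    (hc1min : ∀ m : ℕ, 0 < m → p1 ≤ m * s1 → c1 ≤ m)
    (hc2min : ∀ m : ℕ, 0 < m → p2 ≤ m * s2 → c2 ≤ m)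
    (ha1 : k1 + c1 * s1 ≤ h_in + p1) (ha2 : k2 + c2 * s2 ≤ w_in + p2) :
    ∀ j : Fin d_in, ∀ A ∈ Ssets h_in w_in k1 k2 s1 s2 p1 p2,
      ∃ y : Fin h_in, ∃ x : Fin w_in,
        (∀ i : Fin d_out, ∀ kt ∈ A,
          ∃ m, convMatrix d_in d_out h_in w_in k1 k2 s1 s2 p1 p2 K m (j, y, x) = K i j kt.1 kt.2) ∧
        {v : ℝ | v ≠ 0 ∧ ∃ i : Fin d_out, ∃ kt ∈ A, K i j kt.1 kt.2 = v} ⊆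
          {v : ℝ | v ≠ 0 ∧
            ∃ m, convMatrix d_in d_out h_in w_in k1 k2 s1 s2 p1 p2 K m (j, y, x) = v} := by
  intro j A hA
  simp only [Ssets, Finset.mem_image, Finset.mem_univ, true_and] at hA
  obtain ⟨⟨a, b⟩, hab⟩ := hA
  subst hab
  obtain ⟨R1, hR1le, hp1E, hE1lt, hq1R⟩ :=
    exists_shift k1 h_in s1 p1 c1 hs1 hc1 ha1 a.val a.isLt
  obtain ⟨R2, hR2le, hp2E, hE2lt, hq2R⟩ :=
    exists_shift k2 w_in s2 p2 c2 hs2 hc2 ha2 b.val b.isLt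
  set yF : Fin h_in := ⟨a.val + R1 * s1 - p1, by omega⟩ with hyF
  set xF : Fin w_in := ⟨b.val + R2 * s2 - p2, by omega⟩ with hxF
  have hmain : ∀ i : Fin d_out, ∀ kt ∈ AFin h_in w_in k1 k2 s1 s2 p1 p2 a b,
      ∃ m, convMatrix d_in d_out h_in w_in k1 k2 s1 s2 p1 p2 K m (j, yF, xF)
        = K i j kt.1 kt.2 := by
    intro i kt hkt
    simp only [AFin, Finset.mem_filter, Finset.mem_univ, true_and] at hkt
    obtain ⟨hka, ⟨q1, hq1⟩, hkH, htb, ⟨q2, hq2⟩, htH⟩ := hkt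
    have hk1lt : kt.1.val < k1 := kt.1.isLt
    have hk2lt : kt.2.val < k2 := kt.2.isLt
    have hcm1 : s1 * q1 = q1 * s1 := Nat.mul_comm _ _
    have hcm2 : s2 * q2 = q2 * s2 := Nat.mul_comm _ _
    have hq1le : q1 ≤ R1 := hq1R q1 (by omega) (by omega)
    have hq2le : q2 ≤ R2 := hq2R q2 (by omega) (by omega)
    have hq1m : q1 * s1 ≤ R1 * s1 := Nat.mul_le_mul_right _ hq1le
    have hq2m : q2 * s2 ≤ R2 * s2 := Nat.mul_le_mul_right _ hq2le
    refine ⟨(i, ⟨R1 - q1, by omega⟩, ⟨R2 - q2, by omega⟩),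
      convMatrix_entry_s6 d_in d_out h_in w_in k1 k2 s1 s2 p1 p2 K i j _ _ _ _ kt.1 kt.2 ?_ ?_⟩
    · show (R1 - q1) * s1 + kt.1.val = (a.val + R1 * s1 - p1) + p1
      rw [Nat.sub_mul]; omega
    · show (R2 - q2) * s2 + kt.2.val = (b.val + R2 * s2 - p2) + p2
      rw [Nat.sub_mul]; omega
  refine ⟨yF, xF, hmain, ?_⟩
  rintro v ⟨hv0, i, kt, hktA, hK⟩
  obtain ⟨m, hm⟩ := hmain i kt hktA
  exact ⟨hv0, m, hm.trans hK⟩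

end
end

section
/- Suppose Assumption 1 holds, and let c1, c2 be as in Assumption 1. Then r = c1 + 1 and c = c2 + 1 satisfy 1 ≤ r ≤ h_out and 1 ≤ c ≤ w_out, and for all k ∈ {1,…,k1} and t ∈ {1,…,k2} one has p1 < (r−1)·s1 + k ≤ h_in + p1 and p2 < (c−1)·s2 + t ≤ w_in + p2 (the kernel window at output position (r,c) lies entirely within the unpadded input); consequently, for every input X and every i ∈ {1,…,d_out}, conv(X)(i,r,c) = Σ_{j=1}^{d_in} Σ_{k=1}^{k1} Σ_{t=1}^{k2} K(i,j,k,t)·X(j, c1·s1 + k − p1, c2·s2 + t − p2). -/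
/-!
2D multi-channel convolutional layer, 0-based reindexing of the 1-based
description in the paper.  The input is `X : Fin d_in × Fin h_in × Fin w_in → ℝ`
(a 3D tensor), the kernel is `K : Fin d_out → Fin d_in → Fin k1 → Fin k2 → ℝ`,
strides `s1 s2`, paddings `p1 p2`,
`h_out = (h_in + 2*p1 - k1)/s1 + 1`, `w_out = (w_in + 2*p2 - k2)/s2 + 1`.
-/

noncomputable section

/-- Under Assumption 1 (with `c1`, `c2` as there), the output
position with 1-based coordinates `r = c1 + 1`, `c = c2 + 1` (0-based: `(c1, c2)`)
is a legitimate output position (`c1 < h_out`, `c2 < w_out`), the kernel window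
at that position lies entirely within the unpadded input, and consequently, for
every input `X` and every output channel `i`,
`conv(X)(i, r, c) = ∑ j ∑ k ∑ t, K i j k t · X(j, c1·s1 + k − p1, c2·s2 + t − p2)`
(all sums over 1-based kernel indices; below everything is 0-based). -/
theorem conv_interior_window (d_in d_out h_in w_in k1 k2 s1 s2 p1 p2 : ℕ)
    (hdin : 0 < d_in) (hdout : 0 < d_out) (hhin : 0 < h_in) (hwin : 0 < w_in)
    (hk1pos : 0 < k1) (hk2pos : 0 < k2) (hs1 : 0 < s1) (hs2 : 0 < s2)
    (hk1 : k1 ≤ h_in + 2*p1) (hk2 : k2 ≤ w_in + 2*p2)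
    (K : Fin d_out → Fin d_in → Fin k1 → Fin k2 → ℝ)
    -- Assumption 1
    (c1 c2 : ℕ) (hc1pos : 0 < c1) (hc2pos : 0 < c2)
    (hc1 : p1 ≤ c1 * s1) (hc2 : p2 ≤ c2 * s2)
    (hc1min : ∀ m : ℕ, 0 < m → p1 ≤ m * s1 → c1 ≤ m)
    (hc2min : ∀ m : ℕ, 0 < m → p2 ≤ m * s2 → c2 ≤ m)
    (ha1 : k1 + c1 * s1 ≤ h_in + p1) (ha2 : k2 + c2 * s2 ≤ w_in + p2) :
    -- `(c1, c2)` (0-based) is a valid output position, i.e. `1 ≤ c1+1 ≤ h_out` …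
    c1 < (h_in + 2*p1 - k1)/s1 + 1 ∧ c2 < (w_in + 2*p2 - k2)/s2 + 1 ∧
    -- … the kernel window lies within the unpadded input …
    (∀ k : Fin k1, p1 ≤ c1 * s1 + k.val ∧ c1 * s1 + k.val < h_in + p1) ∧
    (∀ t : Fin k2, p2 ≤ c2 * s2 + t.val ∧ c2 * s2 + t.val < w_in + p2) ∧
    -- … and the convolution at that position reads off the unpadded input.
    (∀ (hr : c1 < (h_in + 2*p1 - k1)/s1 + 1) (hc : c2 < (w_in + 2*p2 - k2)/s2 + 1),
      ∀ X : Fin d_in × Fin h_in × Fin w_in → ℝ, ∀ i : Fin d_out,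
        convMap d_in d_out h_in w_in k1 k2 s1 s2 p1 p2 K X (i, ⟨c1, hr⟩, ⟨c2, hc⟩) =
          ∑ j : Fin d_in, ∑ k : Fin k1, ∑ t : Fin k2,
            K i j k t *
              X (j, ⟨c1 * s1 + k.val - p1, by have := k.isLt; omega⟩,
                    ⟨c2 * s2 + t.val - p2, by have := t.isLt; omega⟩)) := by
  have hr : c1 < (h_in + 2*p1 - k1)/s1 + 1 := by
    have : c1 ≤ (h_in + 2*p1 - k1)/s1 := by
      rw [Nat.le_div_iff_mul_le hs1]; omega
    omega
  have hcb : c2 < (w_in + 2*p2 - k2)/s2 + 1 := by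
    have : c2 ≤ (w_in + 2*p2 - k2)/s2 := by
      rw [Nat.le_div_iff_mul_le hs2]; omega
    omega
  refine ⟨hr, hcb, fun k => ⟨by omega, by have := k.isLt; omega⟩,
    fun t => ⟨by omega, by have := t.isLt; omega⟩, fun hr' hc' X i => ?_⟩
  unfold convMap
  dsimp only
  refine Finset.sum_congr rfl fun j _ => Finset.sum_congr rfl fun k _ =>
    Finset.sum_congr rfl fun t _ => ?_
  congr 1
  rw [padX, dif_pos ⟨by omega, by have := k.isLt; omega, by omega,
    by have := t.isLt; omega⟩]

end
end

section
/- Let (E,d) be a metric space, let ε > 0, let C be a positive integer, and let X_1, …, X_C ⊆ E be nonempty sets that are pairwise 2-epsilon separable, i.e., inf{d(x,y) : x ∈ X_i, y ∈ X_j} > 2ε for all i ≠ j. For each c let R_c = ⋃_{x∈X_c} {x̃ ∈ E : d(x̃,x) ≤ ε} and let D = ⋃_{c=1}^C closure(R_c). Then there exists a continuous function h : D → ℝ (subspace topology) such that for every c ∈ {1,…,C}, every x ∈ X_c, and every x̃ ∈ E with d(x̃,x) ≤ ε, h(x̃) = c; in particular |h(x̃) − c| < 0.5, so every point of every class is robustly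 correctly classified by h under adversarial perturbations of magnitude ε. -/
/-- Let `X₁, …, X_C` be nonempty, pairwise 2-epsilon separable
classes in a metric space, let `R_c = ⋃_{x ∈ X_c} B̄(x, ε)` be their `ε`-robust
covers and `D = ⋃_c closure(R_c)`.  Then there is a function `h`, continuous on
`D` (subspace topology), such that `h(x') = c` for every point `x` of class `c`
(classes are labelled `1, …, C`, i.e. class `c : Fin C` has label `c + 1`) and
every perturbation `x'` with `d(x', x) ≤ ε`; in particular `|h(x') − c| < 0.5`,
so `h` robustly correctly classifies every point under attacks of size `ε`. -/
theorem exists_robust_classifier {E : Type*} [MetricSpace E]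
    (ε : ℝ) (hε : 0 < ε) (C : ℕ) (hC : 0 < C)
    (X : Fin C → Set E) (hne : ∀ c, (X c).Nonempty)
    (hsep : ∀ i j : Fin C, i ≠ j →
      2 * ε < sInf {r : ℝ | ∃ x ∈ X i, ∃ y ∈ X j, r = dist x y}) :
    ∃ h : E → ℝ,
      ContinuousOn h (⋃ c : Fin C, closure (⋃ x ∈ X c, Metric.closedBall x ε)) ∧
      ∀ c : Fin C, ∀ x ∈ X c, ∀ x' : E, dist x' x ≤ ε →
        h x' = (c : ℕ) + 1 ∧ |h x' - ((c : ℕ) + 1)| < 0.5 := by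
  set R : Fin C → Set E := fun c => ⋃ x ∈ X c, Metric.closedBall x ε with hR
  set K : Fin C → Set E := fun c => closure (R c) with hK
  -- disjointness of the K c
  have hdisj : ∀ i j : Fin C, i ≠ j → ∀ z : E, z ∈ K i → z ∈ K j → False := by
    intro i j hij z hzi hzj
    set s := sInf {r : ℝ | ∃ x ∈ X i, ∃ y ∈ X j, r = dist x y} with hs
    have hs2 : 2 * ε < s := hsep i j hij
    set δ := (s - 2 * ε) / 2 with hδ
    have hδpos : 0 < δ := by rw [hδ]; linarith
    obtain ⟨a, ha, hza⟩ := Metric.mem_closure_iff.mp hzi δ hδpos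
    obtain ⟨b, hb, hzb⟩ := Metric.mem_closure_iff.mp hzj δ hδpos
    simp only [hR, Set.mem_iUnion, Metric.mem_closedBall] at ha hb
    obtain ⟨x, hx, hax⟩ := ha
    obtain ⟨y, hy, hby⟩ := hb
    have hmem : dist x y ∈ {r : ℝ | ∃ x ∈ X i, ∃ y ∈ X j, r = dist x y} :=
      ⟨x, hx, y, hy, rfl⟩
    have hbdd : BddBelow {r : ℝ | ∃ x ∈ X i, ∃ y ∈ X j, r = dist x y} := by
      refine ⟨0, ?_⟩
      rintro r ⟨x, _, y, _, rfl⟩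
      exact dist_nonneg
    have hle : s ≤ dist x y := csInf_le hbdd hmem
    have : dist x y < s := by
      calc dist x y ≤ dist x a + dist a z + dist z b + dist b y := by
            have h1 := dist_triangle4 x a b y
            have h2 := dist_triangle a z b
            linarith [dist_triangle4 x a b y, dist_triangle a z b]
        _ < ε + δ + δ + ε := by
            rw [dist_comm a z]
            linarith [dist_comm x a ▸ hax, dist_comm y b ▸ hby]
        _ = s := by rw [hδ]; ring
    linarith
  -- the classifier
  set h : E → ℝ := fun z => ∑ c : Fin C, Set.indicator (K c) (fun _ => ((c : ℕ) : ℝ) + 1) z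
    with hh
  have hval : ∀ c : Fin C, ∀ z ∈ K c, h z = (c : ℕ) + 1 := by
    intro c z hz
    rw [hh]
    simp only
    rw [Finset.sum_eq_single c]
    · simp [Set.indicator_of_mem hz]
    · intro c' _ hc'
      apply Set.indicator_of_notMem
      intro hz'
      exact hdisj c' c hc' z hz' hz
    · simp
  refine ⟨h, ?_, ?_⟩
  · intro z hz
    obtain ⟨c, hzc⟩ := Set.mem_iUnion.mp hz
    have hclosedF : IsClosed (⋃ c' ∈ ({c}ᶜ : Set (Fin C)), K c') :=
      (Set.toFinite _).isClosed_biUnion (fun c' _ => isClosed_closure)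
    have hzF : z ∉ (⋃ c' ∈ ({c}ᶜ : Set (Fin C)), K c') := by
      intro hzF
      obtain ⟨c', hc', hzc'⟩ := Set.mem_iUnion₂.mp hzF
      exact hdisj c' c (by simpa using hc') z hzc' hzc
    have hmemnhds : K c ∈ nhdsWithin z (⋃ c : Fin C, K c) := by
      rw [mem_nhdsWithin]
      refine ⟨(⋃ c' ∈ ({c}ᶜ : Set (Fin C)), K c')ᶜ, hclosedF.isOpen_compl, hzF, ?_⟩
      rintro w ⟨hw1, hw2⟩
      obtain ⟨c', hwc'⟩ := Set.mem_iUnion.mp hw2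
      by_cases hcc : c' = c
      · exact hcc ▸ hwc'
      · exact absurd (Set.mem_iUnion₂.mpr ⟨c', by simpa using hcc, hwc'⟩) hw1
    have heq : h =ᶠ[nhdsWithin z (⋃ c : Fin C, K c)] fun _ => ((c : ℕ) : ℝ) + 1 := by
      filter_upwards [hmemnhds] with w hw
      exact hval c w hw
    exact (continuousWithinAt_const).congr_of_eventuallyEq heq (hval c z hzc)
  · intro c x hx x' hx'
    have hx'R : x' ∈ K c :=
      subset_closure (Set.mem_iUnion₂.mpr ⟨x, hx, Metric.mem_closedBall.mpr hx'⟩)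
    have := hval c x' hx'R
    refine ⟨this, ?_⟩
    rw [this]
    norm_num
end

section
/- For every real ξ > 0 and every integer n ≥ 1, there exists u ∈ (3,4) such that: every function F : ℝ^n → ℝ satisfying |F(x) − (−1.1)| ≤ 0.1 for all x ∈ [2,3]^n and |F(x) − 0.1| ≤ 0.1 for all x ∈ [u,4]^n has Lipschitz constant (with respect to the Euclidean metric) at least ξ; that is, for every K ≥ 0, if |F(x) − F(y)| ≤ K·‖x−y‖₂ for all x, y ∈ ℝ^n, then K ≥ ξ. -/
/-! The corners `(3, …, 3)` of `[2,3]ⁿ` and `(u, …, u)` of `[u,4]ⁿ` are at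
Euclidean distance `(u - 3)√n`, while the values of `F` there differ by at least `1`; hence
`K (u - 3)√n ≥ 1`, and `u - 3 = 1 / (ξ√n + 2)` forces `K ≥ ξ`. -/

open WithLp

lemma EuclideanSpace.dist_toLp_const {ι : Type*} [Fintype ι] (a b : ℝ) :
    dist (toLp 2 (Function.const ι a) : EuclideanSpace ℝ ι) (toLp 2 (Function.const ι b)) =
      √(Fintype.card ι) * |a - b| := by
  simp only [EuclideanSpace.dist_eq, Function.const_apply, Real.dist_eq,
    sq_abs, Finset.sum_const, Finset.card_univ, nsmul_eq_mul]
  rw [Real.sqrt_mul (Nat.cast_nonneg _), Real.sqrt_sq_eq_abs]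

lemma le_of_one_le_abs_sub_of_mul_dist_le_one {X : Type*} [PseudoMetricSpace X] {F : X → ℝ}
    {K ξ : ℝ} {x y : X} (hLip : |F x - F y| ≤ K * dist x y) (hgap : 1 ≤ |F x - F y|)
    (hclose : ξ * dist x y ≤ 1) : ξ ≤ K := by
  have hdist : 0 < dist x y := by
    by_contra! h
    have : dist x y = 0 := le_antisymm h dist_nonneg
    rw [this, mul_zero] at hLip
    linarith
  exact le_of_mul_le_mul_right (by linarith) hdist

theorem robust_classifier_large_lipschitz_general (ξ : ℝ) (hξ : 0 < ξ) (n : ℕ) :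
    ∃ u : ℝ, 3 < u ∧ u < 4 ∧
      ∀ F : EuclideanSpace ℝ (Fin n) → ℝ,
        (∀ x : EuclideanSpace ℝ (Fin n), (∀ i, x i ∈ Set.Icc (2 : ℝ) 3) →
          |F x - (-1.1)| ≤ 0.1) →
        (∀ x : EuclideanSpace ℝ (Fin n), (∀ i, x i ∈ Set.Icc u 4) →
          |F x - 0.1| ≤ 0.1) →
        ∀ K : ℝ, 0 ≤ K →
          (∀ x y : EuclideanSpace ℝ (Fin n), |F x - F y| ≤ K * dist x y) →
          ξ ≤ K := by
  set δ : ℝ := 1 / (ξ * √n + 2)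
  have hδ : 0 < δ := by positivity
  have hδ_le : δ ≤ 1 / 2 := one_div_le_one_div_of_le two_pos (le_add_of_nonneg_left (by positivity))
  have hξδ : ξ * (√n * δ) ≤ 1 := by
    rw [← mul_assoc, ← div_eq_mul_one_div, div_le_one (by positivity)]
    linarith
  refine ⟨3 + δ, by linarith, by linarith, fun F hlow hhigh K _ hLip => ?_⟩
  let corner (a : ℝ) : EuclideanSpace ℝ (Fin n) := toLp 2 (Function.const _ a)
  have h3 := hlow (corner 3) fun _ => ⟨show (2 : ℝ) ≤ 3 by norm_num, le_rfl⟩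
  have h3δ := hhigh (corner (3 + δ)) fun _ => ⟨le_rfl, show 3 + δ ≤ 4 by linarith⟩
  have hgap : 1 ≤ |F (corner 3) - F (corner (3 + δ))| := by
    rw [abs_le] at h3 h3δ
    exact le_abs.2 (Or.inr (by linarith))
  refine le_of_one_le_abs_sub_of_mul_dist_le_one (hLip _ _) hgap ?_
  rwa [EuclideanSpace.dist_toLp_const, Fintype.card_fin, show 3 - (3 + δ) = -δ by ring,
    abs_neg, abs_of_pos hδ]

/-- For every `ξ > 0` and every `n ≥ 1` there exists
`u ∈ (3,4)` such that every `F : ℝⁿ → ℝ` that is uniformly `0.1`-close to the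
value `−1.1` on the cube `[2,3]ⁿ` and uniformly `0.1`-close to the value `0.1`
on the cube `[u,4]ⁿ` has Lipschitz constant (w.r.t. the Euclidean metric) at
least `ξ`: any `K ≥ 0` with `|F(x) − F(y)| ≤ K·‖x−y‖₂` for all `x, y` satisfies
`K ≥ ξ`. -/
theorem robust_classifier_large_lipschitz (ξ : ℝ) (hξ : 0 < ξ) (n : ℕ) (hn : 1 ≤ n) :
    ∃ u : ℝ, 3 < u ∧ u < 4 ∧
      ∀ F : EuclideanSpace ℝ (Fin n) → ℝ,
        (∀ x : EuclideanSpace ℝ (Fin n), (∀ i, x i ∈ Set.Icc (2 : ℝ) 3) →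
          |F x - (-1.1)| ≤ 0.1) →
        (∀ x : EuclideanSpace ℝ (Fin n), (∀ i, x i ∈ Set.Icc u 4) →
          |F x - 0.1| ≤ 0.1) →
        ∀ K : ℝ, 0 ≤ K →
          (∀ x y : EuclideanSpace ℝ (Fin n), |F x - F y| ≤ K * dist x y) →
          ξ ≤ K :=
  robust_classifier_large_lipschitz_general ξ hξ n
end
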